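/- arXiv:math/0201118 — 4 statements merged into one kernel-verified Lean document; each statement's English description precedes it below -/
import Mathlib

section
/- Let f : Γ → Δ be a surjective group homomorphism, let Δ' be a finite-index subgroup of Δ, let Γ' = f⁻¹(Δ'), and let g : Γ' → Δ' be the (surjective) restriction of f. Assume ℚ ⊗_ℤ (Γ')^{ab} and ℚ ⊗_ℤ (Δ')^{ab} are finite-dimensional. Then the induced map g_* : ℚ ⊗_ℤ (Γ')^{ab} → ℚ ⊗_ℤ (Δ')^{ab} maps the kernel of i_{1*} : ℚ ⊗_ℤ (Γ')^{ab} → ℚ ⊗_ℤ Γ^{ab} onto the kernel of i_{2*} : ℚ ⊗_ℤ (Δ')^{ab} → ℚ ⊗_ℤ Δ^{ab}, where i_{1*} and i_{2*} are induced by the inclusions Γ' ≤ Γ and Δ' ≤ Δ. -/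
open scoped TensorProduct

/-- First homology of a group with ℚ-coefficients: `ℚ ⊗_ℤ G^{ab}`. -/
abbrev QH1 (G : Type*) [Group G] : Type _ :=
  ℚ ⊗[ℤ] Additive (Abelianization G)

/-- The ℚ-linear map on first homology induced by a group homomorphism. -/
noncomputable def inducedMap {G H : Type*} [Group G] [Group H] (f : G →* H) :
    QH1 G →ₗ[ℚ] QH1 H :=
  LinearMap.baseChange ℚ
    (MonoidHom.toAdditive (Abelianization.map f)).toIntLinearMap

/-- The ℚ-linear map on first homology induced by the transfer homomorphism
`G → H^{ab}` of a finite-index subgroup `H ≤ G`. -/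
noncomputable def transferMap {G : Type*} [Group G] (H : Subgroup G) [H.FiniteIndex] :
    QH1 G →ₗ[ℚ] QH1 H :=
  LinearMap.baseChange ℚ
    (MonoidHom.toAdditive
      (Abelianization.lift (MonoidHom.transfer (Abelianization.of : H →* Abelianization H)))).toIntLinearMap

/-!
Abelianization and `ℚ ⊗[ℤ] -` are right exact, so for a surjection `f : Γ → Δ` with kernel `N`
the sequence `H₁(N; ℚ) → H₁(Γ; ℚ) → H₁(Δ; ℚ) → 0` is exact. Since `N ≤ Γ'` and `g` kills `N`,
a diagram chase in the square formed by `g`, `f` and the two inclusions finishes the proof: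
lift `y ∈ ker i₂*` to `x`, write `i₁* x` as the class of some `w` coming from `N`, and replace
`x` by `x - w`, which lies in `ker i₁*` and still maps to `y`.
-/

theorem LinearMap.map_ker_eq_ker_of_comm {R A B C D K : Type*} [Ring R]
    [AddCommGroup A] [AddCommGroup B] [AddCommGroup C] [AddCommGroup D] [AddCommGroup K]
    [Module R A] [Module R B] [Module R C] [Module R D] [Module R K]
    {i₁ : A →ₗ[R] B} {f : B →ₗ[R] C} {g : A →ₗ[R] D} {i₂ : D →ₗ[R] C} {k : K →ₗ[R] A}
    (hcomm : i₂ ∘ₗ g = f ∘ₗ i₁) (hg : Function.Surjective g) (hgk : g ∘ₗ k = 0)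
    (hk : LinearMap.ker f ≤ LinearMap.range (i₁ ∘ₗ k)) :
    (LinearMap.ker i₁).map g = LinearMap.ker i₂ := by
  have hcomm' (x : A) : i₂ (g x) = f (i₁ x) := LinearMap.congr_fun hcomm x
  refine le_antisymm ?_ fun y hy => ?_
  · rintro _ ⟨x, hx, rfl⟩
    rw [SetLike.mem_coe, LinearMap.mem_ker] at hx
    rw [LinearMap.mem_ker, hcomm', hx, map_zero]
  obtain ⟨x, rfl⟩ := hg y
  have hx : i₁ x ∈ LinearMap.ker f := by rwa [LinearMap.mem_ker, ← hcomm']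
  obtain ⟨w, hw⟩ := hk hx
  have hgkw : g (k w) = 0 := LinearMap.congr_fun hgk w
  refine ⟨x - k w, ?_, by rw [map_sub, hgkw, sub_zero]⟩
  rw [SetLike.mem_coe, LinearMap.mem_ker, map_sub, ← hw, LinearMap.comp_apply, sub_self]

namespace Abelianization

variable {G H : Type*} [Group G] [Group H] {f : G →* H}

theorem map_surjective (hf : Function.Surjective f) : Function.Surjective (map f) := by
  intro x
  induction x using QuotientGroup.induction_on with
  | H h =>
    obtain ⟨g, rfl⟩ := hf h
    exact ⟨of g, rfl⟩

theorem mulExact_map_ker_subtype (hf : Function.Surjective f) :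
    Function.MulExact (map f.ker.subtype) (map f) := by
  refine MonoidHom.mulExact_of_comp_of_mem_range (hom_ext _ _ (MonoidHom.ext fun n => ?_)) ?_
  · simp [MonoidHom.mem_ker.mp n.2]
  · intro x hx
    induction x using QuotientGroup.induction_on with
    | H g =>
      have hfg : f g ∈ (commutator G).map f := by
        rw [map_commutator_eq, MonoidHom.range_eq_top_of_surjective f hf, ← commutator_def,
          ← ker_of]
        exact hx
      obtain ⟨c, hc, hcg⟩ := hfg
      refine ⟨of ⟨g * c⁻¹, by simp [hcg]⟩, ?_⟩
      have hc' : of c = 1 := by rwa [← MonoidHom.mem_ker, ker_of]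
      change of (g * c⁻¹) = of g
      simp [hc']

end Abelianization

section InducedMap

variable {G H K : Type*} [Group G] [Group H] [Group K]

theorem inducedMap_comp (g : H →* K) (f : G →* H) :
    inducedMap (g.comp f) = inducedMap g ∘ₗ inducedMap f := by
  rw [inducedMap, inducedMap, inducedMap, ← LinearMap.baseChange_comp]
  congr 1
  exact LinearMap.ext fun _ => (Abelianization.map_map_apply _).symm

theorem inducedMap_surjective {f : G →* H} (hf : Function.Surjective f) :
    Function.Surjective (inducedMap f) :=
  LinearMap.baseChange_surjective ℚ (Abelianization.map_surjective hf)

theorem inducedMap_ker_subtype_exact {f : G →* H} (hf : Function.Surjective f) :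
    Function.Exact (inducedMap f.ker.subtype) (inducedMap f) := by
  have hexact : Function.Exact
      (MonoidHom.toAdditive (Abelianization.map f.ker.subtype)).toIntLinearMap
      (MonoidHom.toAdditive (Abelianization.map f)).toIntLinearMap := fun y =>
    Abelianization.mulExact_map_ker_subtype hf y.toMul
  simp only [inducedMap, LinearMap.baseChange_eq_ltensor]
  exact lTensor_exact ℚ hexact (Abelianization.map_surjective hf)

theorem inducedMap_one : inducedMap (1 : G →* H) = 0 := by
  have h : Abelianization.map (1 : G →* H) = 1 := Abelianization.hom_ext _ _ rfl
  rw [inducedMap, h]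
  exact LinearMap.baseChange_zero

end InducedMap

theorem stmt5_general {Γ Δ : Type*} [Group Γ] [Group Δ] (f : Γ →* Δ)
    (hf : Function.Surjective f) (Δ' : Subgroup Δ) :
    Submodule.map (inducedMap (f.subgroupComap Δ'))
        (LinearMap.ker (inducedMap (Δ'.comap f).subtype)) =
      LinearMap.ker (inducedMap Δ'.subtype) := by
  have hker : f.ker ≤ Δ'.comap f := fun n hn => by
    simp [Subgroup.mem_comap, MonoidHom.mem_ker.mp hn]
  have hkill : (f.subgroupComap Δ').comp (Subgroup.inclusion hker) = 1 :=
    MonoidHom.ext fun n => Subtype.ext (MonoidHom.mem_ker.mp n.2)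
  refine LinearMap.map_ker_eq_ker_of_comm (f := inducedMap f)
    (k := inducedMap (Subgroup.inclusion hker)) ?_
    (inducedMap_surjective (f.subgroupComap_surjective_of_surjective Δ' hf)) ?_ ?_
  · simp only [← inducedMap_comp]
    rfl
  · rw [← inducedMap_comp, hkill, inducedMap_one]
  · rw [← inducedMap_comp, (inducedMap_ker_subtype_exact hf).linearMap_ker_eq]
    rfl

theorem stmt5 {Γ Δ : Type*} [Group Γ] [Group Δ] (f : Γ →* Δ)
    (hf : Function.Surjective f) (Δ' : Subgroup Δ) [Δ'.FiniteIndex]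
    [FiniteDimensional ℚ (QH1 (Δ'.comap f))] [FiniteDimensional ℚ (QH1 Δ')] :
    Submodule.map (inducedMap (f.subgroupComap Δ'))
        (LinearMap.ker (inducedMap (Δ'.comap f).subtype)) =
      LinearMap.ker (inducedMap Δ'.subtype) :=
  stmt5_general f hf Δ'
end

section
/- Let G be a group such that ℚ ⊗_ℤ G^{ab} is finite-dimensional, let f be an automorphism of G, and let G ⋊_f ℤ be the semidirect product determined by the homomorphism ℤ → Aut(G) sending 1 to f. Then b₁(G ⋊_f ℤ) = 1 + dim_ℚ ker(f_* − id), where f_* is the ℚ-linear automorphism of ℚ ⊗_ℤ G^{ab} induced by f; that is, the first Betti number of the mapping-torus group equals 1 plus the dimension of the subspace of ℚ ⊗_ℤ G^{ab} fixed by f_*. -/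
open scoped TensorProduct

/-!
In `G ⋊_f ℤ` the generator `t` of `ℤ` conjugates `g` to `f g`, so in the abelianization the
relation `f_* x = x` is imposed on `G^{ab}` and nothing else: `(G ⋊_f ℤ)^{ab}` is the product of
the coinvariants `G^{ab} ⧸ (f_* - 1)` with `ℤ`. Tensoring with `ℚ` is right exact, so it turns
these coinvariants into the cokernel of `f_* - 1` on `ℚ ⊗ G^{ab}`, and the cokernel of an
endomorphism of a finite-dimensional space has the same dimension as its kernel.
-/

theorem LinearMap.finrank_quotient_range_eq_finrank_ker {K V : Type*} [DivisionRing K]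
    [AddCommGroup V] [Module K V] [FiniteDimensional K V] (T : V →ₗ[K] V) :
    Module.finrank K (V ⧸ LinearMap.range T) = Module.finrank K (LinearMap.ker T) := by
  have hquot := (LinearMap.range T).finrank_quotient_add_finrank
  have hrank := T.finrank_range_add_finrank_ker
  omega

noncomputable def LinearMap.tensorQuotientRangeEquiv {R A M N : Type*} [CommRing R] [CommRing A]
    [Algebra R A] [AddCommGroup M] [Module R M] [AddCommGroup N] [Module R N] (δ : M →ₗ[R] N) :
    A ⊗[R] (N ⧸ LinearMap.range δ) ≃ₗ[A] (A ⊗[R] N) ⧸ LinearMap.range (δ.baseChange A) :=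
  have hexact : Function.Exact (δ.baseChange A) ((LinearMap.range δ).mkQ.baseChange A) := by
    simpa only [LinearMap.baseChange_eq_ltensor] using
      lTensor_exact A (LinearMap.exact_map_mkQ_range δ) (Submodule.mkQ_surjective _)
  (LinearMap.quotKerEquivOfSurjective _
      (LinearMap.baseChange_surjective A (Submodule.mkQ_surjective _))).symm ≪≫ₗ
    Submodule.quotEquivOfEq _ _ hexact.linearMap_ker_eq

theorem MonoidHom.map_zpow_apply_of_forall_map_apply {G M : Type*} [Group G] [Monoid M]
    (ψ : G →* M) {σ : MulAut G} (hσ : ∀ g, ψ (σ g) = ψ g) (n : ℤ) (g : G) :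
    ψ ((σ ^ n) g) = ψ g := by
  induction n using Int.induction_on generalizing g with
  | zero => rfl
  | succ n ih => rw [zpow_add_one, MulAut.mul_apply, ih, hσ]
  | pred n ih => rw [zpow_sub_one, MulAut.mul_apply, ih, ← hσ, MulAut.apply_inv_self]

abbrev MappingTorus {G : Type*} [Group G] (f : MulAut G) : Type _ :=
  G ⋊[zpowersHom (MulAut G) f] Multiplicative ℤ

namespace MappingTorus

open SemidirectProduct

variable {G : Type*} [Group G] (f : MulAut G)

noncomputable def abSubOne : Additive (Abelianization G) →ₗ[ℤ] Additive (Abelianization G) :=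
  (MonoidHom.toAdditive (Abelianization.map f.toMonoidHom)).toIntLinearMap - LinearMap.id

abbrev Coinvariants : Type _ := Additive (Abelianization G) ⧸ LinearMap.range (abSubOne f)

noncomputable def coinvariantsMk : G →* Multiplicative (Coinvariants f) :=
  (AddMonoidHom.toMultiplicativeRight (LinearMap.range (abSubOne f)).mkQ.toAddMonoidHom).comp
    Abelianization.of

theorem coinvariantsMk_surjective : Function.Surjective (coinvariantsMk f) :=
  (Submodule.mkQ_surjective _).comp QuotientGroup.mk_surjective

theorem coinvariantsMk_apply_self (g : G) : coinvariantsMk f (f g) = coinvariantsMk f g :=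
  (Submodule.Quotient.eq _).mpr ⟨Additive.ofMul (Abelianization.of g), rfl⟩

noncomputable def toCoinvariantsProd :
    Abelianization (MappingTorus f) →* Multiplicative (Coinvariants f) × Multiplicative ℤ :=
  Abelianization.lift <| SemidirectProduct.lift ((MonoidHom.inl _ _).comp (coinvariantsMk f))
    (MonoidHom.inr _ _) fun n => by
      ext g <;>
        simp [(coinvariantsMk f).map_zpow_apply_of_forall_map_apply (coinvariantsMk_apply_self f)]

theorem of_inl_apply_self (g : G) :
    Abelianization.of (inl (f g) : MappingTorus f) = Abelianization.of (inl g) := by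
  have : (inl (f g) : MappingTorus f) = inr (.ofAdd 1) * inl g * (inr (.ofAdd 1))⁻¹ := by
    simpa using inl_aut (φ := zpowersHom (MulAut G) f) (.ofAdd 1) g
  rw [this, map_mul, map_mul, map_inv, mul_inv_cancel_comm]

theorem map_inl_comp_map :
    (Abelianization.map (inl : G →* MappingTorus f)).comp (Abelianization.map f.toMonoidHom) =
      Abelianization.map inl := by
  ext g
  simp [of_inl_apply_self]

noncomputable def inlCoinvariants :
    Coinvariants f →ₗ[ℤ] Additive (Abelianization (MappingTorus f)) :=
  (LinearMap.range (abSubOne f)).liftQ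
    (MonoidHom.toAdditive (Abelianization.map (inl : G →* MappingTorus f))).toIntLinearMap <| by
      rintro _ ⟨x, rfl⟩
      rw [LinearMap.mem_ker, abSubOne, LinearMap.sub_apply, map_sub, sub_eq_zero]
      exact congrArg Additive.ofMul (DFunLike.congr_fun (map_inl_comp_map f) x.toMul)

noncomputable def ofCoinvariantsProd :
    Multiplicative (Coinvariants f) × Multiplicative ℤ →* Abelianization (MappingTorus f) :=
  (AddMonoidHom.toMultiplicativeLeft (inlCoinvariants f).toAddMonoidHom).coprod
    (Abelianization.of.comp inr)

@[simp]
theorem toCoinvariantsProd_of_inl (g : G) :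
    toCoinvariantsProd f (.of (inl g)) = (coinvariantsMk f g, 1) := by
  simp [toCoinvariantsProd]

@[simp]
theorem toCoinvariantsProd_of_inr (n : Multiplicative ℤ) :
    toCoinvariantsProd f (.of (inr n)) = (1, n) := by
  simp [toCoinvariantsProd]

@[simp]
theorem ofCoinvariantsProd_inl (g : G) :
    ofCoinvariantsProd f (coinvariantsMk f g, 1) = .of (inl g) := by
  simp [ofCoinvariantsProd, inlCoinvariants, coinvariantsMk]

@[simp]
theorem ofCoinvariantsProd_inr (n : Multiplicative ℤ) :
    ofCoinvariantsProd f (1, n) = .of (inr n) := by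
  simp [ofCoinvariantsProd]

noncomputable def abelianizationEquiv :
    Abelianization (MappingTorus f) ≃* Multiplicative (Coinvariants f) × Multiplicative ℤ :=
  MonoidHom.toMulEquiv (toCoinvariantsProd f) (ofCoinvariantsProd f)
    (Abelianization.hom_ext _ _ <| SemidirectProduct.hom_ext (by ext; simp) (by ext; simp))
    (MonoidHom.ext fun ⟨c, n⟩ => by
      obtain ⟨g, rfl⟩ := coinvariantsMk_surjective f c
      rw [show (coinvariantsMk f g, n) = (coinvariantsMk f g, 1) * (1, n) by simp, map_mul,
        map_mul]
      simp)

theorem baseChange_abSubOne :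
    (abSubOne f).baseChange ℚ = inducedMap f.toMonoidHom - LinearMap.id := by
  rw [abSubOne, LinearMap.baseChange_sub, LinearMap.baseChange_id]
  rfl

noncomputable def qh1Equiv :
    QH1 (MappingTorus f) ≃ₗ[ℚ] (QH1 G ⧸ LinearMap.range ((abSubOne f).baseChange ℚ)) × ℚ :=
  (MulEquiv.toAdditiveLeft ((abelianizationEquiv f).trans
      (MulEquiv.prodMultiplicative _ _).symm)).toIntLinearEquiv.baseChange ℤ ℚ _ _ ≪≫ₗ
    TensorProduct.prodRight ℤ ℚ ℚ _ ℤ ≪≫ₗ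
    (abSubOne f).tensorQuotientRangeEquiv.prodCongr
      (TensorProduct.AlgebraTensorModule.rid ℤ ℚ ℚ)

end MappingTorus

theorem stmt7 {G : Type*} [Group G] [FiniteDimensional ℚ (QH1 G)] (f : MulAut G) :
    Module.finrank ℚ
        (QH1 (SemidirectProduct G (Multiplicative ℤ) (zpowersHom (MulAut G) f))) =
      1 + Module.finrank ℚ
        (LinearMap.ker (inducedMap (f : MulAut G).toMonoidHom - LinearMap.id)) := by
  rw [← MappingTorus.baseChange_abSubOne, (MappingTorus.qh1Equiv f).finrank_eq,
    Module.finrank_prod, Module.finrank_self, LinearMap.finrank_quotient_range_eq_finrank_ker,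
    add_comm]
end

section
/- The subgroup of SL(2,ℤ) generated by the matrices [[1,0],[4,1]] and [[1,1],[0,1]] has finite index in SL(2,ℤ). -/
/-- The matrix [[1,0],[4,1]] as an element of SL(2,ℤ). -/
def A84 : Matrix.SpecialLinearGroup (Fin 2) ℤ :=
  ⟨!![1, 0; 4, 1], by norm_num [Matrix.det_fin_two_of]⟩

/-- The matrix [[1,1],[0,1]] as an element of SL(2,ℤ). -/
def B8 : Matrix.SpecialLinearGroup (Fin 2) ℤ :=
  ⟨!![1, 1; 0, 1], by norm_num [Matrix.det_fin_two_of]⟩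

/-!
The subgroup contains the congruence subgroup `Γ₁(4)`, which has finite index. To see this, run
a Euclidean algorithm on the first column `(a, c)` of `g ∈ Γ₁(4)`, staying inside `Γ₁(4)`:
left multiplication by a power of `T = B8` replaces `a` by its centred remainder modulo `c`, so
`2|a| ≤ |c|`, with strict inequality because `a` is odd and `4 ∣ c`; left multiplication by a
power of `A84` then replaces `c` by its centred remainder modulo `4a`, so `|c| ≤ 2|a|`. Hence
`|c|` strictly decreases, and once `c = 0` the congruence `a ≡ 1 (mod 4)` forces `g = T ^ b`.
-/

open Matrix Matrix.SpecialLinearGroup ModularGroup CongruenceSubgroup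
open scoped MatrixGroups

theorem Int.exists_two_mul_abs_add_mul_le (a c : ℤ) (hc : c ≠ 0) :
    ∃ q, 2 * |a + q * c| ≤ |c| := by
  have hdiv := Int.emod_add_mul_ediv a c
  have hnonneg := Int.emod_nonneg a hc
  have hlt := Int.emod_lt_abs a hc
  rcases le_or_gt (2 * (a % c)) |c| with hr | hr
  · refine ⟨-(a / c), ?_⟩
    rwa [show a + -(a / c) * c = a % c by linear_combination -hdiv, abs_of_nonneg hnonneg]
  · refine ⟨-(a / c) - c.sign, ?_⟩
    rw [show a + (-(a / c) - c.sign) * c = a % c - |c| by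
      linear_combination -hdiv - Int.sign_mul_self_eq_abs c, abs_of_neg (by linarith)]
    linarith

theorem Int.two_mul_abs_ne_abs_of_odd_of_four_dvd {a c : ℤ} (ha : Odd a) (hc : 4 ∣ c) :
    2 * |a| ≠ |c| := by
  obtain ⟨m, rfl⟩ := ha
  obtain ⟨t, rfl⟩ := hc
  rcases abs_choice (2 * m + 1) with h | h <;> rcases abs_choice (4 * t) with h' | h' <;> omega

lemma A84_eq_S_mul_T_zpow_mul_S_inv : A84 = S * T ^ (-4 : ℤ) * S⁻¹ := by
  ext i j
  fin_cases i <;> fin_cases j <;> rfl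

lemma coe_A84_zpow (n : ℤ) : ↑(A84 ^ n) = !![1, 0; 4 * n, 1] := by
  rw [A84_eq_S_mul_T_zpow_mul_S_inv, conj_zpow, ← _root_.zpow_mul, coe_mul, coe_mul, coe_T_zpow,
    S_inv, coe_neg, coe_S]
  simp

lemma A84_zpow_mul_apply_one_zero (n : ℤ) (g : SL(2, ℤ)) :
    (A84 ^ n * g) 1 0 = g 1 0 + n * (4 * g 0 0) := by
  simp [coe_A84_zpow, mul_apply, Fin.sum_univ_two]
  ring

lemma T_zpow_mul_apply_zero_zero (n : ℤ) (g : SL(2, ℤ)) :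
    (T ^ n * g) 0 0 = g 0 0 + n * g 1 0 := by
  simp [coe_T_zpow, mul_apply, Fin.sum_univ_two]

lemma T_zpow_mul_apply_one_zero (n : ℤ) (g : SL(2, ℤ)) : (T ^ n * g) 1 0 = g 1 0 := by
  simp

lemma A84_mem_Gamma1_four : A84 ∈ Gamma1 4 := by
  rw [Gamma1_mem]
  decide

lemma T_mem_Gamma1_four : T ∈ Gamma1 4 := by
  simp

lemma mem_Gamma1_iff_dvd {N : ℕ} {g : SL(2, ℤ)} :
    g ∈ Gamma1 N ↔ (N : ℤ) ∣ g 0 0 - 1 ∧ (N : ℤ) ∣ g 1 1 - 1 ∧ (N : ℤ) ∣ g 1 0 := by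
  simp [← ZMod.intCast_zmod_eq_zero_iff_dvd, sub_eq_zero]

lemma eq_T_zpow_of_mem_Gamma1 {N : ℕ} (hN : 2 < N) {g : SL(2, ℤ)} (hg : g ∈ Gamma1 N)
    (hc : g 1 0 = 0) : g = T ^ g 0 1 := by
  have hdet := g.det_coe
  rw [det_fin_two, hc, mul_zero, sub_zero] at hdet
  obtain ⟨ha, hd⟩ : g 0 0 = 1 ∧ g 1 1 = 1 := by
    refine (Int.eq_one_or_neg_one_of_mul_eq_one' hdet).resolve_right fun ⟨ha, _⟩ ↦ ?_
    have := Int.le_of_dvd two_pos (dvd_neg.mp (ha ▸ (mem_Gamma1_iff_dvd.mp hg).1))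
    omega
  ext i j
  fin_cases i <;> fin_cases j <;> simp [coe_T_zpow, ha, hd, hc]

lemma A84_mem_closure : A84 ∈ Subgroup.closure ({A84, B8} : Set SL(2, ℤ)) :=
  Subgroup.subset_closure (Set.mem_insert _ _)

lemma T_mem_closure : T ∈ Subgroup.closure ({A84, B8} : Set SL(2, ℤ)) :=
  Subgroup.subset_closure (Set.mem_insert_of_mem _ rfl)

lemma exists_mem_closure_mul_mem_Gamma1_four_natAbs_lt {g : SL(2, ℤ)} (hg : g ∈ Gamma1 4)
    (hc : g 1 0 ≠ 0) : ∃ h ∈ Subgroup.closure ({A84, B8} : Set SL(2, ℤ)),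
      h * g ∈ Gamma1 4 ∧ ((h * g) 1 0).natAbs < (g 1 0).natAbs := by
  obtain ⟨q, hq⟩ := Int.exists_two_mul_abs_add_mul_le (g 0 0) (g 1 0) hc
  set g' := T ^ q * g with hg'_def
  have hg' : g' ∈ Gamma1 4 := mul_mem (zpow_mem T_mem_Gamma1_four q) hg
  have hc' : g' 1 0 = g 1 0 := T_zpow_mul_apply_one_zero q g
  have ha' : Odd (g' 0 0) := by
    obtain ⟨t, ht⟩ := (mem_Gamma1_iff_dvd.mp hg').1
    exact ⟨2 * t, by omega⟩
  have hlt : 2 * |g' 0 0| < |g 1 0| := by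
    refine lt_of_le_of_ne (T_zpow_mul_apply_zero_zero q g ▸ hq) ?_
    exact Int.two_mul_abs_ne_abs_of_odd_of_four_dvd ha' (mem_Gamma1_iff_dvd.mp hg).2.2
  obtain ⟨k, hk⟩ := Int.exists_two_mul_abs_add_mul_le (g 1 0) (4 * g' 0 0)
    (mul_ne_zero four_ne_zero (by rintro h; simp [h] at ha'))
  refine ⟨A84 ^ k * T ^ q, mul_mem (zpow_mem A84_mem_closure k) (zpow_mem T_mem_closure q),
    ?_, ?_⟩
  · rw [mul_assoc]
    exact mul_mem (zpow_mem A84_mem_Gamma1_four k) hg'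
  · rw [abs_mul, abs_of_pos (four_pos : (0 : ℤ) < 4)] at hk
    rw [mul_assoc, ← hg'_def, A84_zpow_mul_apply_one_zero, hc', ← Int.ofNat_lt,
      Int.natCast_natAbs, Int.natCast_natAbs]
    linarith

theorem Gamma1_four_le_closure : Gamma1 4 ≤ Subgroup.closure ({A84, B8} : Set SL(2, ℤ)) := by
  intro g hg
  induction hn : (g 1 0).natAbs using Nat.strong_induction_on generalizing g with
  | _ n ih =>
    by_cases hc : g 1 0 = 0
    · rw [eq_T_zpow_of_mem_Gamma1 (by norm_num) hg hc]
      exact zpow_mem T_mem_closure _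
    · obtain ⟨h, hH, hhg, hlt⟩ := exists_mem_closure_mul_mem_Gamma1_four_natAbs_lt hg hc
      simpa using mul_mem (inv_mem hH) (ih _ (hn ▸ hlt) hhg rfl)

theorem stmt8 : (Subgroup.closure ({A84, B8} : Set (Matrix.SpecialLinearGroup (Fin 2) ℤ))).FiniteIndex := by
  exact Subgroup.finiteIndex_of_le Gamma1_four_le_closure
end

section
/- The subgroup of SL(2,ℤ) generated by the matrices [[1,0],[2,1]] and [[1,2],[0,1]] is contained in the kernel of the reduction homomorphism SL(2,ℤ) → SL(2,ℤ/2ℤ), and has finite index in SL(2,ℤ). -/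
/-!
The subgroup `Γ(2)` of `SL(2, ℤ)` is `±⟨A, B⟩`, by a Euclidean descent on the lower-left entry.
For `M = !![a, b; c, d] ∈ Γ(2)` with `c ≠ 0`, `a` is odd and `c` even, so a power `B ^ k` turns `a`
into `a + 2kc` with `|a + 2kc| < |c|` (the parities of `a` and `c` differ, so the residue of `a`
modulo `2c` is never `±|c|`), and then a power `A ^ j` turns `c` into `c + 2j(a + 2kc)`, of
absolute value `< |a + 2kc|`. Once `c = 0`, `a = d = ±1` and `M = ±B ^ (b / 2)`. So `Γ(2)` meets
only the cosets of `1` and `-1` in `SL(2, ℤ) ⧸ ⟨A, B⟩`, and `⟨A, B⟩` inherits finite index from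
`Γ(2)`.
-/

/-- The matrix [[1,0],[2,1]] as an element of SL(2,ℤ). -/
def A92 : Matrix.SpecialLinearGroup (Fin 2) ℤ :=
  ⟨!![1, 0; 2, 1], by norm_num [Matrix.det_fin_two_of]⟩

/-- The matrix [[1,2],[0,1]] as an element of SL(2,ℤ). -/
def B92 : Matrix.SpecialLinearGroup (Fin 2) ℤ :=
  ⟨!![1, 2; 0, 1], by norm_num [Matrix.det_fin_two_of]⟩

open Matrix.SpecialLinearGroup ModularGroup CongruenceSubgroup
open scoped MatrixGroups

theorem Int.exists_abs_add_two_mul_mul_lt {a c : ℤ} (hc : c ≠ 0) (hac : Odd (a - c)) :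
    ∃ k : ℤ, |a + 2 * k * c| < |c| := by
  have hm : 0 < 2 * c.natAbs := by omega
  obtain ⟨t, ht⟩ : ((2 * c.natAbs : ℕ) : ℤ) ∣ a - a.bmod (2 * c.natAbs) :=
    Int.ModEq.dvd Int.bmod_emod
  rw [Nat.cast_mul, Nat.cast_two, mul_assoc] at ht
  have hlo := Int.le_bmod (x := a) hm
  have hhi := Int.bmod_lt (x := a) hm
  obtain ⟨s, hs⟩ := hac
  refine ⟨-t * c.sign, ?_⟩
  have : a + 2 * (-t * c.sign) * c = a.bmod (2 * c.natAbs) := by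
    linear_combination (-2 * t) * Int.sign_mul_self c + ht
  rw [this, abs_lt, ← Int.natCast_natAbs]
  omega

theorem Subgroup.finiteIndex_of_finite_image_quotient {G : Type*} [Group G] {H K : Subgroup G}
    [K.FiniteIndex] (hK : ((↑) '' (K : Set G) : Set (G ⧸ H)).Finite) : H.FiniteIndex := by
  have := K.finite_quotient_of_finiteIndex
  have := hK.to_subtype
  have hsurj : Function.Surjective
      fun p : (G ⧸ K) × ((↑) '' (K : Set G) : Set (G ⧸ H)) => p.1.out • (p.2 : G ⧸ H) := by
    intro x
    induction x using QuotientGroup.induction_on with | H g =>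
    refine ⟨((g : G ⧸ K), ⟨((g : G ⧸ K).out⁻¹ * g : G), _, ?_, rfl⟩), ?_⟩
    · exact QuotientGroup.eq.1 (QuotientGroup.out_eq' (g : G ⧸ K))
    · simp [MulAction.Quotient.smul_mk]
  have := Finite.of_surjective _ hsurj
  exact H.finiteIndex_of_finite_quotient

lemma B92_eq_T_sq : B92 = T ^ 2 := by
  ext i j; fin_cases i <;> fin_cases j <;> rfl

lemma A92_eq_S_mul_T_zpow_mul_S_inv : A92 = S * T ^ (-2 : ℤ) * S⁻¹ := by
  ext i j; fin_cases i <;> fin_cases j <;> rfl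

lemma coe_B92_zpow (k : ℤ) : ↑(B92 ^ k) = !![1, 2 * k; 0, 1] := by
  rw [B92_eq_T_sq, ← zpow_natCast, ← zpow_mul, coe_T_zpow]; push_cast; rfl

lemma coe_A92_zpow (k : ℤ) : ↑(A92 ^ k) = !![1, 0; 2 * k, 1] := by
  rw [A92_eq_S_mul_T_zpow_mul_S_inv, conj_zpow, ← zpow_mul, coe_mul, coe_mul, coe_T_zpow, S_inv,
    coe_neg, coe_S]
  ext i j; fin_cases i <;> fin_cases j <;> simp

lemma A92_mem_Gamma_two : A92 ∈ Γ(2) := by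
  rw [Gamma_mem]; simp [A92]; decide

lemma B92_mem_Gamma_two : B92 ∈ Γ(2) := by
  rw [Gamma_mem]; simp [B92]; decide

lemma closure_le_Gamma_two : Subgroup.closure {A92, B92} ≤ Γ(2) := by
  rw [Subgroup.closure_le, Set.insert_subset_iff, Set.singleton_subset_iff]
  exact ⟨A92_mem_Gamma_two, B92_mem_Gamma_two⟩

lemma A92_mem_closure : A92 ∈ Subgroup.closure {A92, B92} :=
  Subgroup.subset_closure (Set.mem_insert _ _)

lemma B92_mem_closure : B92 ∈ Subgroup.closure {A92, B92} :=
  Subgroup.subset_closure (Set.mem_insert_of_mem _ rfl)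

lemma B92_zpow_mul_apply_zero_zero (k : ℤ) (M : SL(2, ℤ)) :
    (B92 ^ k * M) 0 0 = M 0 0 + 2 * k * M 1 0 := by
  simp [coe_B92_zpow, Matrix.mul_apply, Fin.sum_univ_two]

lemma B92_zpow_mul_apply_one_zero (k : ℤ) (M : SL(2, ℤ)) :
    (B92 ^ k * M) 1 0 = M 1 0 := by
  simp [coe_B92_zpow, Matrix.mul_apply, Fin.sum_univ_two]

lemma A92_zpow_mul_apply_one_zero (k : ℤ) (M : SL(2, ℤ)) :
    (A92 ^ k * M) 1 0 = M 1 0 + 2 * k * M 0 0 := by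
  simp [coe_A92_zpow, Matrix.mul_apply, Fin.sum_univ_two]; ring

lemma odd_apply_zero_zero_of_mem_Gamma_two {M : SL(2, ℤ)} (hM : M ∈ Γ(2)) : Odd (M 0 0) :=
  ZMod.intCast_eq_one_iff_odd.1 (Gamma_mem.1 hM).1

lemma even_apply_zero_one_of_mem_Gamma_two {M : SL(2, ℤ)} (hM : M ∈ Γ(2)) : Even (M 0 1) :=
  ZMod.intCast_eq_zero_iff_even.1 (Gamma_mem.1 hM).2.1

lemma even_apply_one_zero_of_mem_Gamma_two {M : SL(2, ℤ)} (hM : M ∈ Γ(2)) : Even (M 1 0) :=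
  ZMod.intCast_eq_zero_iff_even.1 (Gamma_mem.1 hM).2.2.1

lemma exists_mem_closure_abs_mul_apply_one_zero_lt {M : SL(2, ℤ)} (hM : M ∈ Γ(2))
    (hc : M 1 0 ≠ 0) :
    ∃ h ∈ Subgroup.closure {A92, B92}, |(h * M) 1 0| < |M 1 0| := by
  have ha := odd_apply_zero_zero_of_mem_Gamma_two hM
  have hc_even := even_apply_one_zero_of_mem_Gamma_two hM
  obtain ⟨k, hk⟩ := Int.exists_abs_add_two_mul_mul_lt hc (ha.sub_even hc_even)
  have ha' : Odd (M 0 0 + 2 * k * M 1 0) := ha.add_even ((even_two_mul k).mul_right _)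
  have ha'_ne : M 0 0 + 2 * k * M 1 0 ≠ 0 := by
    have := Int.odd_iff.1 ha'
    omega
  obtain ⟨j, hj⟩ := Int.exists_abs_add_two_mul_mul_lt ha'_ne (hc_even.sub_odd ha')
  refine ⟨A92 ^ j * B92 ^ k, mul_mem (zpow_mem A92_mem_closure j)
    (zpow_mem B92_mem_closure k), ?_⟩
  rw [mul_assoc, A92_zpow_mul_apply_one_zero, B92_zpow_mul_apply_zero_zero,
    B92_zpow_mul_apply_one_zero]
  exact hj.trans hk

lemma mem_or_neg_mem_closure_of_apply_one_zero_eq_zero {M : SL(2, ℤ)} (hM : M ∈ Γ(2))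
    (hc : M 1 0 = 0) : M ∈ Subgroup.closure {A92, B92} ∨ -M ∈ Subgroup.closure {A92, B92} := by
  obtain ⟨e, he⟩ := even_apply_zero_one_of_mem_Gamma_two hM
  have had : M 0 0 * M 1 1 = 1 := by
    have hdet := M.det_coe
    rwa [Matrix.det_fin_two, hc, mul_zero, sub_zero] at hdet
  rcases Int.eq_one_or_neg_one_of_mul_eq_one' had with ⟨ha, hd⟩ | ⟨ha, hd⟩
  · left
    convert zpow_mem B92_mem_closure e
    ext i j
    fin_cases i <;> fin_cases j <;> simp [coe_B92_zpow, ha, hd, hc, he, two_mul]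
  · right
    convert zpow_mem B92_mem_closure (-e)
    ext i j
    fin_cases i <;> fin_cases j <;> simp [coe_B92_zpow, ha, hd, hc, he, two_mul]

theorem mem_or_neg_mem_closure_of_mem_Gamma_two {M : SL(2, ℤ)} (hM : M ∈ Γ(2)) :
    M ∈ Subgroup.closure {A92, B92} ∨ -M ∈ Subgroup.closure {A92, B92} := by
  induction hn : (M 1 0).natAbs using Nat.strong_induction_on generalizing M with
  | _ n ih =>
    by_cases hc : M 1 0 = 0
    · exact mem_or_neg_mem_closure_of_apply_one_zero_eq_zero hM hc
    obtain ⟨h, hh, hlt⟩ := exists_mem_closure_abs_mul_apply_one_zero_lt hM hc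
    rw [← Int.natCast_natAbs, ← Int.natCast_natAbs, hn] at hlt
    rcases ih _ (by omega) (mul_mem (closure_le_Gamma_two hh) hM) rfl with hhM | hhM
    · exact .inl ((Subgroup.mul_mem_cancel_left _ hh).1 hhM)
    · rw [← mul_neg] at hhM
      exact .inr ((Subgroup.mul_mem_cancel_left _ hh).1 hhM)

theorem stmt9 :
    Subgroup.closure ({A92, B92} : Set (Matrix.SpecialLinearGroup (Fin 2) ℤ)) ≤
        (Matrix.SpecialLinearGroup.map (n := Fin 2) (Int.castRingHom (ZMod 2))).ker ∧
      (Subgroup.closure ({A92, B92} : Set (Matrix.SpecialLinearGroup (Fin 2) ℤ))).FiniteIndex := by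
  refine ⟨closure_le_Gamma_two, Subgroup.finiteIndex_of_finite_image_quotient (K := Γ(2)) ?_⟩
  refine ((Set.finite_singleton ((-1 : SL(2, ℤ)) : SL(2, ℤ) ⧸ _)).insert
    ((1 : SL(2, ℤ)) : SL(2, ℤ) ⧸ _)).subset ?_
  rintro _ ⟨M, hM, rfl⟩
  rcases mem_or_neg_mem_closure_of_mem_Gamma_two hM with h | h
  · exact .inl (QuotientGroup.eq.2 (by simpa using h))
  · exact .inr (QuotientGroup.eq.2 (by simpa using inv_mem h))
end
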